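/- arXiv:2511.09994 — 2 statements merged into one kernel-verified Lean document; each statement's English description precedes it below -/
import Mathlib

section
/- Let (M^n,g) be a Riemannian manifold, v ∈ C^∞(M), and d > 0 a constant. Then div(∇_{∇v}∇v − (Δv/d)∇v) = |∇²v − (Δv/n)g|² + (1/n − 1/d)(Δv)² + (1 − 1/d)⟨∇Δv, ∇v⟩ + Ric(∇v, ∇v). -/
open Finset


private lemma sym_aux {n : ℕ} (f : EuclideanSpace ℝ (Fin n) → ℝ)
    (hf : ContDiff ℝ (⊤ : ℕ∞) f) (x u w : EuclideanSpace ℝ (Fin n)) :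
    fderiv ℝ (fun y => fderiv ℝ f y u) x w = fderiv ℝ (fun y => fderiv ℝ f y w) x u := by
  have hdf : DifferentiableAt ℝ (fderiv ℝ f) x :=
    ((hf.fderiv_right (m := 1) (WithTop.coe_le_coe.mpr le_top)).differentiable one_ne_zero) x
  have h1 : ∀ u : EuclideanSpace ℝ (Fin n), fderiv ℝ (fun y => fderiv ℝ f y u) x
      = (fderiv ℝ (fderiv ℝ f) x).flip u := by
    intro u
    have := fderiv_clm_apply (c := fderiv ℝ f) (u := fun _ => u) hdf (differentiableAt_const u)
    simpa using this
  have hsymm : IsSymmSndFDerivAt ℝ f x :=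
    (hf.contDiffAt).isSymmSndFDerivAt (by
      rw [minSmoothness_of_isRCLikeNormedField]; exact WithTop.coe_le_coe.mpr le_top)
  rw [h1, h1]
  exact hsymm w u

/-- Lemma 3.1 of the paper, stated on flat Euclidean space (where `Ric ≡ 0`) in
orthonormal coordinates. Here `∂ᵢ f = fderiv f (eᵢ)`, the Hessian has components
`Hᵢⱼ = ∂ⱼ∂ᵢ v`, `Δv = ∑ᵢ Hᵢᵢ`, the vector field `∇_{∇v}∇v − (Δv/d)∇v` has
components `Xⱼ = ∑ᵢ ∂ᵢv Hᵢⱼ − (Δv/d) ∂ⱼv`, and `div X = ∑ⱼ ∂ⱼ Xⱼ`. -/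
theorem stmt_13 (n : ℕ) (hn : 1 ≤ n)
    (v : EuclideanSpace ℝ (Fin n) → ℝ) (hv : ContDiff ℝ (⊤ : ℕ∞) v) (d : ℝ) (hd : 0 < d)
    (e : Fin n → EuclideanSpace ℝ (Fin n)) (he : e = fun i => EuclideanSpace.single i 1)
    (H : Fin n → Fin n → EuclideanSpace ℝ (Fin n) → ℝ)
    (hH : H = fun i j x => fderiv ℝ (fun y => fderiv ℝ v y (e i)) x (e j))
    (lap : EuclideanSpace ℝ (Fin n) → ℝ)
    (hlap : lap = fun x => ∑ i : Fin n, H i i x)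
    (X : Fin n → EuclideanSpace ℝ (Fin n) → ℝ)
    (hX : X = fun j x =>
      (∑ i : Fin n, fderiv ℝ v x (e i) * H i j x) - lap x / d * fderiv ℝ v x (e j)) :
    ∀ x : EuclideanSpace ℝ (Fin n),
      (∑ j : Fin n, fderiv ℝ (X j) x (e j))
        = (∑ i : Fin n, ∑ j : Fin n,
            (H i j x - lap x / n * (if i = j then (1 : ℝ) else 0)) ^ 2)
          + (1 / n - 1 / d) * (lap x) ^ 2
          + (1 - 1 / d) * ∑ i : Fin n, fderiv ℝ lap x (e i) * fderiv ℝ v x (e i) := by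
  intro x
  have hd' : d ≠ 0 := ne_of_gt hd
  have hn' : (n : ℝ) ≠ 0 := Nat.cast_ne_zero.mpr (by omega)
  -- basic smoothness facts
  have hp : ∀ i, ContDiff ℝ (⊤ : ℕ∞) (fun y => fderiv ℝ v y (e i)) :=
    fun i => (hv.fderiv_right (by simp)).clm_apply contDiff_const
  have hHc : ∀ i j, ContDiff ℝ (⊤ : ℕ∞) (H i j) := by
    intro i j
    rw [hH]
    exact ((hp i).fderiv_right (by simp)).clm_apply contDiff_const
  have hlapc : ContDiff ℝ (⊤ : ℕ∞) lap := by
    rw [hlap]; exact ContDiff.sum fun i _ => hHc i i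
  have hpd : ∀ i (y : EuclideanSpace ℝ (Fin n)),
      DifferentiableAt ℝ (fun y => fderiv ℝ v y (e i)) y :=
    fun i y => ((hp i).differentiable (by simp)) y
  have hHd : ∀ i j (y : EuclideanSpace ℝ (Fin n)), DifferentiableAt ℝ (H i j) y :=
    fun i j y => ((hHc i j).differentiable (by simp)) y
  have hlapd : ∀ y : EuclideanSpace ℝ (Fin n), DifferentiableAt ℝ lap y :=
    fun y => (hlapc.differentiable (by simp)) y
  -- symmetry of the Hessian
  have hsym : ∀ i j, H i j = H j i := by
    intro i j; funext y; rw [hH]; exact sym_aux v hv y (e i) (e j)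
  -- third derivative commutation
  have key : ∀ i, ∑ j, fderiv ℝ (H i j) x (e j) = fderiv ℝ lap x (e i) := by
    intro i
    have h1 : ∀ j, fderiv ℝ (H i j) x (e j) = fderiv ℝ (H j j) x (e i) := by
      intro j
      rw [hsym i j, hH]
      exact sym_aux (fun y => fderiv ℝ v y (e j)) (hp j) x (e i) (e j)
    rw [Finset.sum_congr rfl fun j _ => h1 j, hlap,
      fderiv_fun_sum (fun j _ => hHd j j x), ContinuousLinearMap.sum_apply]
  -- divergence of X, term by term
  have main : ∀ j, fderiv ℝ (X j) x (e j)
      = (∑ i, (fderiv ℝ v x (e i) * fderiv ℝ (H i j) x (e j) + H i j x * H i j x))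
        - d⁻¹ * (lap x * H j j x + fderiv ℝ v x (e j) * fderiv ℝ lap x (e j)) := by
    intro j
    have hXj : X j = fun y => (∑ i, fderiv ℝ v y (e i) * H i j y)
        - d⁻¹ * (lap y * fderiv ℝ v y (e j)) := by
      rw [hX]; funext y; ring
    have dA : DifferentiableAt ℝ (fun y => ∑ i, fderiv ℝ v y (e i) * H i j y) x :=
      DifferentiableAt.fun_sum fun i _ => (hpd i x).mul (hHd i j x)
    have dB' : DifferentiableAt ℝ (fun y => lap y * fderiv ℝ v y (e j)) x :=
      (hlapd x).mul (hpd j x)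
    have hfp : ∀ i k, fderiv ℝ (fun y => fderiv ℝ v y (e i)) x (e k) = H i k x := by
      intro i k; rw [hH]
    rw [hXj, fderiv_fun_sub dA (dB'.const_mul d⁻¹), ContinuousLinearMap.sub_apply,
      fderiv_fun_sum (A := fun i y => fderiv ℝ v y (e i) * H i j y)
        (fun i _ => (hpd i x).mul (hHd i j x)), ContinuousLinearMap.sum_apply,
      fderiv_const_mul dB' d⁻¹, ContinuousLinearMap.smul_apply,
      fderiv_fun_mul (hlapd x) (hpd j x)]
    simp only [ContinuousLinearMap.add_apply, ContinuousLinearMap.smul_apply, smul_eq_mul]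
    congr 1
    · refine Finset.sum_congr rfl fun i _ => ?_
      rw [fderiv_fun_mul (hpd i x) (hHd i j x)]
      simp only [ContinuousLinearMap.add_apply, ContinuousLinearMap.smul_apply, smul_eq_mul,
        hfp]
      try ring
    · rw [hfp j j]
      try ring
  -- expand the squared traceless Hessian
  have rhsq : ∑ i, ∑ j, (H i j x - lap x / n * (if i = j then (1:ℝ) else 0)) ^ 2
      = (∑ i, ∑ j, H i j x * H i j x) - 2 * (lap x / n) * lap x + (lap x / n) ^ 2 * n := by
    have hexp : ∀ i j : Fin n, (H i j x - lap x / n * (if i = j then (1:ℝ) else 0)) ^ 2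
        = H i j x * H i j x - 2 * (lap x / n) * (if i = j then H i j x else 0)
          + (lap x / n) ^ 2 * (if i = j then 1 else 0) := by
      intro i j; by_cases h : i = j <;> simp [h] <;> ring
    simp only [hexp, Finset.sum_add_distrib, Finset.sum_sub_distrib, ← Finset.mul_sum,
      Finset.sum_ite_eq, Finset.mem_univ, if_true, Finset.sum_const, nsmul_eq_mul,
      Finset.card_univ, Fintype.card_fin, mul_one]
    rw [show (∑ i : Fin n, H i i x) = lap x by rw [hlap]]
    ring
  -- put everything together
  rw [Finset.sum_congr rfl fun j _ => main j, rhsq]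
  simp only [Finset.sum_sub_distrib, Finset.sum_add_distrib]
  have swap : ∑ j : Fin n, ∑ i : Fin n, fderiv ℝ v x (e i) * fderiv ℝ (H i j) x (e j)
      = ∑ i : Fin n, fderiv ℝ lap x (e i) * fderiv ℝ v x (e i) := by
    rw [Finset.sum_comm]
    refine Finset.sum_congr rfl fun i _ => ?_
    rw [← Finset.mul_sum, key i]; ring
  rw [swap]
  have hAsw : ∑ j : Fin n, ∑ i : Fin n, H i j x * H i j x
      = ∑ i : Fin n, ∑ j : Fin n, H i j x * H i j x := Finset.sum_comm
  rw [hAsw]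
  have hdist : ∑ j : Fin n, d⁻¹ * (lap x * H j j x + fderiv ℝ v x (e j) * fderiv ℝ lap x (e j))
      = d⁻¹ * (lap x * lap x
        + ∑ j : Fin n, fderiv ℝ lap x (e j) * fderiv ℝ v x (e j)) := by
    rw [← Finset.mul_sum, Finset.sum_add_distrib, ← Finset.mul_sum,
      show (∑ j : Fin n, H j j x) = lap x by rw [hlap]]
    congr 2
    exact Finset.sum_congr rfl fun j _ => mul_comm _ _
  rw [hdist]
  field_simp
  ring
end

section
/- Let (M^n,g) be a Riemannian manifold admitting a smooth function w with ∇²w = (Δw/n)·g (i.e., ∇w is a closed conformal vector field). Then Ric(∇w, ·) = −((n−1)/n)·∇Δw as 1-forms, and for any v ∈ C^∞(M) and constant d > 0: div(∇_{∇w}∇v − (Δv/d)∇w) = (1/n − 1/d)·Δv·Δw − (1 − 1/n)·⟨∇Δw, ∇v⟩ + (1 − 1/d)·⟨∇Δv, ∇w⟩. -/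
open Finset

section helpers

variable {E : Type*} [NormedAddCommGroup E] [NormedSpace ℝ E]

lemma dapply_smooth {f : E → ℝ} (hf : ContDiff ℝ (⊤ : ℕ∞) f) (u : E) :
    ContDiff ℝ (⊤ : ℕ∞) (fun y => fderiv ℝ f y u) :=
  (hf.fderiv_right (by simp)).clm_apply contDiff_const

lemma fderiv_dapply {f : E → ℝ} (hf : ContDiff ℝ (⊤ : ℕ∞) f) (x u u' : E) :
    fderiv ℝ (fun y => fderiv ℝ f y u) x u' = fderiv ℝ (fderiv ℝ f) x u' u := by
  have h := ((ContinuousLinearMap.apply ℝ ℝ u).hasFDerivAt.comp x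
    (((hf.fderiv_right (m := 1) (by exact WithTop.coe_le_coe.mpr le_top)).differentiable one_ne_zero) x).hasFDerivAt)
  have h2 : (fun y => fderiv ℝ f y u)
      = (⇑(ContinuousLinearMap.apply ℝ ℝ u) ∘ fderiv ℝ f) := rfl
  rw [h2, h.fderiv]; rfl

lemma symm3 {f : E → ℝ} (hf : ContDiff ℝ (⊤ : ℕ∞) f) (x u u' : E) :
    fderiv ℝ (fun y => fderiv ℝ f y u) x u' = fderiv ℝ (fun y => fderiv ℝ f y u') x u := by
  rw [fderiv_dapply hf, fderiv_dapply hf]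
  exact second_derivative_symmetric (fun y => ((hf.differentiable (by simp)) y).hasFDerivAt)
    (((hf.fderiv_right (m := 1) (by exact WithTop.coe_le_coe.mpr le_top)).differentiable one_ne_zero x).hasFDerivAt) u' u

end helpers

lemma fderiv_div_const'' {E : Type*} [NormedAddCommGroup E] [NormedSpace ℝ E]
    {f : E → ℝ} {x : E} (c : ℝ) (hf : DifferentiableAt ℝ f x) (u : E) :
    fderiv ℝ (fun y => f y / c) x u = fderiv ℝ f x u / c := by
  simp only [div_eq_mul_inv]
  rw [fderiv_mul_const hf]
  simp [mul_comm]

/-- Lemma 3.2 of the paper, stated on flat Euclidean space (where `Ric ≡ 0`) in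
orthonormal coordinates. The hypothesis `∇²w = (Δw/n) g` says `∇w` is a closed
conformal vector field. The first conclusion is `Ric(∇w,·) = −((n−1)/n) ∇Δw`
(on flat space the left-hand side vanishes); the second is the divergence
identity for `∇_{∇w}∇v − (Δv/d)∇w`. -/
theorem stmt_14 (n : ℕ) (hn : 1 ≤ n)
    (v w : EuclideanSpace ℝ (Fin n) → ℝ)
    (hv : ContDiff ℝ (⊤ : ℕ∞) v) (hw : ContDiff ℝ (⊤ : ℕ∞) w) (d : ℝ) (hd : 0 < d)
    (e : Fin n → EuclideanSpace ℝ (Fin n)) (he : e = fun i => EuclideanSpace.single i 1)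
    (Hv Hw : Fin n → Fin n → EuclideanSpace ℝ (Fin n) → ℝ)
    (hHv : Hv = fun i j x => fderiv ℝ (fun y => fderiv ℝ v y (e i)) x (e j))
    (hHw : Hw = fun i j x => fderiv ℝ (fun y => fderiv ℝ w y (e i)) x (e j))
    (lapv lapw : EuclideanSpace ℝ (Fin n) → ℝ)
    (hlapv : lapv = fun x => ∑ i : Fin n, Hv i i x)
    (hlapw : lapw = fun x => ∑ i : Fin n, Hw i i x)
    (hconf : ∀ x, ∀ i j, Hw i j x = lapw x / n * (if i = j then (1 : ℝ) else 0))
    (X : Fin n → EuclideanSpace ℝ (Fin n) → ℝ)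
    (hX : X = fun j x =>
      (∑ i : Fin n, fderiv ℝ w x (e i) * Hv i j x) - lapv x / d * fderiv ℝ w x (e j)) :
    (∀ x, ∀ i : Fin n, (0 : ℝ) = -(((n : ℝ) - 1) / n) * fderiv ℝ lapw x (e i)) ∧
    (∀ x : EuclideanSpace ℝ (Fin n),
      (∑ j : Fin n, fderiv ℝ (X j) x (e j))
        = (1 / n - 1 / d) * lapv x * lapw x
          - (1 - 1 / n) * ∑ i : Fin n, fderiv ℝ lapw x (e i) * fderiv ℝ v x (e i)
          + (1 - 1 / d) * ∑ i : Fin n, fderiv ℝ lapv x (e i) * fderiv ℝ w x (e i)) := by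
  have hn0 : (n : ℝ) ≠ 0 := by positivity
  have hd0 : d ≠ 0 := ne_of_gt hd
  -- smoothness facts
  have hHvs : ∀ i j, ContDiff ℝ (⊤ : ℕ∞) (Hv i j) := by
    intro i j; rw [hHv]; exact dapply_smooth (dapply_smooth hv (e i)) (e j)
  have hHws : ∀ i j, ContDiff ℝ (⊤ : ℕ∞) (Hw i j) := by
    intro i j; rw [hHw]; exact dapply_smooth (dapply_smooth hw (e i)) (e j)
  have hlapvs : ContDiff ℝ (⊤ : ℕ∞) lapv := by
    rw [hlapv]; exact ContDiff.sum fun i _ => hHvs i i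
  have hlapws : ContDiff ℝ (⊤ : ℕ∞) lapw := by
    rw [hlapw]; exact ContDiff.sum fun i _ => hHws i i
  -- symmetry of the Hessian as functions
  have hHvsym : ∀ i j, Hv i j = Hv j i := by
    intro i j; rw [hHv]; funext y; exact symm3 hv y (e i) (e j)
  -- third-derivative symmetry
  have h3v : ∀ (i j k : Fin n) x,
      fderiv ℝ (Hv i j) x (e k) = fderiv ℝ (Hv i k) x (e j) := by
    intro i j k x; rw [hHv]
    exact symm3 (dapply_smooth hv (e i)) x (e j) (e k)
  have h3w : ∀ (i j k : Fin n) x,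
      fderiv ℝ (Hw i j) x (e k) = fderiv ℝ (Hw i k) x (e j) := by
    intro i j k x; rw [hHw]
    exact symm3 (dapply_smooth hw (e i)) x (e j) (e k)
  -- derivative of lapv as sum
  have hdlapv : ∀ x (i : Fin n),
      fderiv ℝ lapv x (e i) = ∑ j : Fin n, fderiv ℝ (Hv j j) x (e i) := by
    intro x i
    rw [hlapv, fderiv_fun_sum (fun j _ => ((hHvs j j).differentiable (by simp) x))]
    simp
  have hdlapw : ∀ x (i : Fin n),
      fderiv ℝ lapw x (e i) = ∑ j : Fin n, fderiv ℝ (Hw j j) x (e i) := by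
    intro x i
    rw [hlapw, fderiv_fun_sum (fun j _ => ((hHws j j).differentiable (by simp) x))]
    simp
  -- divergence of a row of the Hessian of v
  have hdivHv : ∀ (i : Fin n) x,
      ∑ j : Fin n, fderiv ℝ (Hv i j) x (e j) = fderiv ℝ lapv x (e i) := by
    intro i x
    rw [hdlapv x i]
    refine Finset.sum_congr rfl fun j _ => ?_
    rw [hHvsym i j, h3v j i j x]
  -- gradient of lapw vanishes (n ≥ 2) or the coefficient vanishes (n = 1)
  have hz : ∀ x (i : Fin n), ((n : ℝ) - 1) * fderiv ℝ lapw x (e i) = 0 := by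
    intro x i
    rcases eq_or_lt_of_le hn with h1 | h2
    · have hn1 : (n : ℝ) - 1 = 0 := by rw [← h1]; norm_num
      rw [hn1, zero_mul]
    · have : Nontrivial (Fin n) := Fin.nontrivial_iff_two_le.mpr h2
      obtain ⟨j, hj⟩ := exists_ne i
      have hjj : Hw j j = fun y => lapw y / n := by
        funext y; rw [hconf y j j, if_pos rfl, mul_one]
      have hji : Hw j i = fun _ => (0 : ℝ) := by
        funext y; rw [hconf y j i, if_neg hj, mul_zero]
      have e1 : fderiv ℝ (Hw j j) x (e i) = fderiv ℝ (Hw j i) x (e j) := h3w j j i x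
      rw [hjj, hji] at e1
      rw [fderiv_div_const'' (n : ℝ) (hlapws.differentiable (by simp) x)] at e1
      simp only [fderiv_fun_const, Pi.zero_apply, ContinuousLinearMap.zero_apply] at e1
      have e2 : fderiv ℝ lapw x (e i) = 0 := by
        field_simp at e1
        simpa using e1
      rw [e2, mul_zero]
  constructor
  · intro x i
    have h := hz x i
    have : ((n : ℝ) - 1) / n * fderiv ℝ lapw x (e i) = 0 := by
      rw [div_mul_eq_mul_div, h, zero_div]
    rw [neg_mul, this, neg_zero]
  · intro x
    -- differentiability at x of the pieces
    have hDw : ∀ i : Fin n, ContDiff ℝ (⊤ : ℕ∞) (fun y => fderiv ℝ w y (e i)) :=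
      fun i => dapply_smooth hw (e i)
    have hXj : ∀ j : Fin n, fderiv ℝ (X j) x (e j)
        = (∑ i : Fin n, (fderiv ℝ w x (e i) * fderiv ℝ (Hv i j) x (e j)
            + Hv i j x * Hw i j x))
          - (lapv x / d * Hw j j x
            + fderiv ℝ w x (e j) * (fderiv ℝ lapv x (e j) / d)) := by
      intro j
      have hA : ∀ i : Fin n, DifferentiableAt ℝ
          (fun y => fderiv ℝ w y (e i) * Hv i j y) x :=
        fun i => ((hDw i).differentiable (by simp) x).mul ((hHvs i j).differentiable (by simp) x)
      have hAs : DifferentiableAt ℝ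
          (fun y => ∑ i : Fin n, fderiv ℝ w y (e i) * Hv i j y) x :=
        DifferentiableAt.fun_sum (fun i _ => hA i)
      have hB : DifferentiableAt ℝ (fun y => lapv y / d * fderiv ℝ w y (e j)) x :=
        (((hlapvs.div_const d).differentiable (by simp)) x).mul
          ((hDw j).differentiable (by simp) x)
      rw [hX]
      simp only []
      rw [fderiv_fun_sub hAs hB]
      rw [ContinuousLinearMap.sub_apply]
      congr 1
      · rw [fderiv_fun_sum (fun i _ => hA i), ContinuousLinearMap.sum_apply]
        refine Finset.sum_congr rfl fun i _ => ?_
        rw [fderiv_fun_mul ((hDw i).differentiable (by simp) x)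
          ((hHvs i j).differentiable (by simp) x)]
        simp only [ContinuousLinearMap.add_apply, ContinuousLinearMap.coe_smul',
          Pi.smul_apply, smul_eq_mul]
        have : fderiv ℝ (fun y => fderiv ℝ w y (e i)) x (e j) = Hw i j x := by
          rw [hHw]
        rw [this]
      · rw [fderiv_fun_mul (((hlapvs.div_const d).differentiable (by simp)) x)
          ((hDw j).differentiable (by simp) x)]
        simp only [ContinuousLinearMap.add_apply, ContinuousLinearMap.coe_smul',
          Pi.smul_apply, smul_eq_mul]
        have h1 : fderiv ℝ (fun y => fderiv ℝ w y (e j)) x (e j) = Hw j j x := by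
          rw [hHw]
        have h2 : fderiv ℝ (fun y => lapv y / d) x (e j) = fderiv ℝ lapv x (e j) / d :=
          fderiv_div_const'' d (hlapvs.differentiable (by simp) x) (e j)
        rw [h1, h2]
    -- now pure sum manipulation
    have S1 : ∑ j : Fin n, ∑ i : Fin n,
        fderiv ℝ w x (e i) * fderiv ℝ (Hv i j) x (e j)
        = ∑ i : Fin n, fderiv ℝ w x (e i) * fderiv ℝ lapv x (e i) := by
      rw [Finset.sum_comm]
      refine Finset.sum_congr rfl fun i _ => ?_
      rw [← Finset.mul_sum, hdivHv i x]
    have S2 : ∑ j : Fin n, ∑ i : Fin n, Hv i j x * Hw i j x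
        = lapv x * lapw x / n := by
      have : ∀ j : Fin n, ∑ i : Fin n, Hv i j x * Hw i j x
          = Hv j j x * (lapw x / n) := by
        intro j
        rw [Finset.sum_eq_single j]
        · rw [hconf x j j, if_pos rfl, mul_one]
        · intro i _ hij
          rw [hconf x i j, if_neg hij, mul_zero, mul_zero]
        · intro h; exact absurd (Finset.mem_univ j) h
      rw [Finset.sum_congr rfl fun j _ => this j, ← Finset.sum_mul]
      simp only [hlapv]
      ring
    have S3 : ∑ j : Fin n, lapv x / d * Hw j j x = lapv x / d * lapw x := by
      rw [← Finset.mul_sum]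
      simp only [hlapw]
    have hTz : (1 - 1 / (n : ℝ)) *
        (∑ i : Fin n, fderiv ℝ lapw x (e i) * fderiv ℝ v x (e i)) = 0 := by
      have h1 : ((n : ℝ) - 1) *
          (∑ i : Fin n, fderiv ℝ lapw x (e i) * fderiv ℝ v x (e i)) = 0 := by
        rw [Finset.mul_sum]
        refine Finset.sum_eq_zero fun i _ => ?_
        rw [← mul_assoc, hz x i, zero_mul]
      have h2 : (1 - 1 / (n : ℝ)) = ((n : ℝ) - 1) / n := by field_simp
      rw [h2, div_mul_eq_mul_div, h1, zero_div]
    rw [Finset.sum_congr rfl fun j _ => hXj j]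
    simp only [Finset.sum_sub_distrib, Finset.sum_add_distrib]
    rw [S1, S2, S3]
    have S4 : ∑ j : Fin n, fderiv ℝ w x (e j) * (fderiv ℝ lapv x (e j) / d)
        = (∑ j : Fin n, fderiv ℝ lapv x (e j) * fderiv ℝ w x (e j)) / d := by
      rw [Finset.sum_div]
      exact Finset.sum_congr rfl fun j _ => by ring
    rw [S4, hTz]
    have hP : ∑ i : Fin n, fderiv ℝ w x (e i) * fderiv ℝ lapv x (e i)
        = ∑ i : Fin n, fderiv ℝ lapv x (e i) * fderiv ℝ w x (e i) :=
      Finset.sum_congr rfl fun i _ => mul_comm _ _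
    rw [hP]
    field_simp
    ring
end
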